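/- Let k ≥ 1 and 0 ≤ i < k be integers, and define bit_i : ℤ_{2^k} → {−1,1} by bit_i(x) = (−1)^{x_i}, where x = Σ_{j=0}^{k−1} x_j·2^j is the binary expansion of the representative of x in {0,…,2^k−1}. Then for every α ∈ ℤ_{2^k}: the Fourier coefficient bit_i^(α) = 0 unless α is an odd multiple of 2^{k−i−1} (i.e., α ≡ m·2^{k−i−1} mod 2^k for some odd integer m); and whenever bit_i^(α) ≠ 0, one has |bit_i^(α)| ≤ 2^{k−i} / | |α|_{2^k} |, where |α|_{2^k} denotes the unique integer in (−2^{k−1}, 2^{k−1}] congruent to α modulo 2^k. -/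

import Mathlib

/-!
Write `2^k = 2^(i+j+1)` and `q = e^{-2πi b/2^k}` with `b = |α|_{2^k}`. Splitting `x = 2^i s + r`
with `r < 2^i`, bit `i` of `x` is the parity of `s`, so the Fourier sum factors as
`2^k · bit_i^(α) = (Σ_{s<2^(j+1)} (-q^(2^i))^s) · (Σ_{r<2^i} q^r)`. Since `q^(2^k) = 1`, the first
geometric sum vanishes unless `q^(2^i) = -1`, which forces `b` to be an odd multiple of `2^j`.
In that case the first sum is `2^(j+1)`, the second is `2/(1-q)`, and Jordan's inequality gives
`|1 - q| = 2|sin(πb/2^k)| ≥ 4|b|/2^k`, because `|b| ≤ 2^(k-1)`.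
-/

open Finset Complex
open scoped Real

noncomputable def dft {N : ℕ} [NeZero N] (f : ZMod N → ℂ) (a : ZMod N) : ℂ :=
  (N : ℂ)⁻¹ * ∑ x : ZMod N,
    f x * Complex.exp (-(2 * (Real.pi : ℂ) * Complex.I * (a.val : ℂ) * (x.val : ℂ) / (N : ℂ)))

noncomputable def bitFn (k i : ℕ) : ZMod (2 ^ k) → ℂ := fun x =>
  if Nat.testBit x.val i then -1 else 1

theorem Finset.sum_range_mul_eq_sum_sum {M : Type*} [AddCommMonoid M] (f : ℕ → M) (K n : ℕ) :
    ∑ x ∈ range (K * n), f x = ∑ s ∈ range n, ∑ r ∈ range K, f (K * s + r) := by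
  induction n with
  | zero => simp
  | succ n ih => rw [Nat.mul_succ, sum_range_add, ih, sum_range_succ]

theorem sum_range_two_pow_mul_testBit {R : Type*} [CommRing R] (q : R) (i n : ℕ) :
    ∑ x ∈ range (2 ^ i * n), (if x.testBit i then -1 else 1) * q ^ x
      = (∑ s ∈ range n, (-q ^ 2 ^ i) ^ s) * ∑ r ∈ range (2 ^ i), q ^ r := by
  rw [sum_range_mul_eq_sum_sum, sum_mul]
  refine sum_congr rfl fun s _ => ?_
  rw [mul_sum]
  refine sum_congr rfl fun r hr => ?_
  rw [Nat.testBit_two_pow_mul_add s (mem_range.mp hr), if_neg (lt_irrefl i), Nat.sub_self,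
    Nat.testBit_zero, pow_add, pow_mul, neg_pow]
  rcases Nat.even_or_odd s with hs | hs
  · simp [Nat.even_iff.mp hs, hs.neg_one_pow]
  · simp [Nat.odd_iff.mp hs, hs.neg_one_pow]

theorem two_div_pi_mul_abs_le_norm_exp_I_mul_sub_one {x : ℝ} (hx : |x| ≤ π) :
    2 / π * |x| ≤ ‖exp (I * x) - 1‖ := by
  have hsin := Real.mul_abs_le_abs_sin (x := x / 2) (by rw [abs_div, abs_two]; linarith)
  rw [norm_exp_I_mul_ofReal_sub_one, norm_mul, Real.norm_eq_abs, Real.norm_eq_abs, abs_two]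
  rw [abs_div, abs_two] at hsin
  linarith

noncomputable def dftRoot (N : ℕ) (b : ℤ) : ℂ := exp (-(2 * π * I * b / N))

theorem dftRoot_pow_self {N : ℕ} (hN : N ≠ 0) (b : ℤ) : dftRoot N b ^ N = 1 := by
  rw [dftRoot, ← exp_nat_mul, show (N : ℂ) * -(2 * π * I * b / N) = (-b : ℤ) * (2 * π * I) by
    push_cast; field_simp]
  exact exp_int_mul_two_pi_mul_I _

theorem dftRoot_valMinAbs {N : ℕ} [NeZero N] (α : ZMod N) :
    dftRoot N α.valMinAbs = exp (-(2 * π * I * α.val / N)) := by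
  rw [dftRoot, exp_neg, exp_neg, ← ZMod.toCircle_intCast, ZMod.coe_valMinAbs, ZMod.toCircle_apply]

theorem four_mul_abs_le_mul_norm_dftRoot_sub_one {N : ℕ} (hN : 0 < N) {b : ℤ}
    (hb : |b| * 2 ≤ N) : 4 * |(b : ℝ)| ≤ N * ‖dftRoot N b - 1‖ := by
  have hNR : (0 : ℝ) < N := by exact_mod_cast hN
  have hbR : |(b : ℝ)| * 2 ≤ N := by exact_mod_cast hb
  have hx : |-(2 * π * b / N)| = 2 * π * |(b : ℝ)| / N := by
    rw [abs_neg, abs_div, abs_mul, abs_of_pos (by positivity : (0 : ℝ) < 2 * π), abs_of_pos hNR]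
  have h := two_div_pi_mul_abs_le_norm_exp_I_mul_sub_one (x := -(2 * π * b / N)) (by
    rw [hx, div_le_iff₀ hNR]
    nlinarith [Real.pi_pos])
  rw [hx] at h
  rw [dftRoot, show -(2 * π * I * b / N) = I * ↑(-(2 * π * b / N)) by push_cast; ring,
    ← div_le_iff₀' hNR]
  refine le_of_eq_of_le ?_ h
  field_simp
  ring

theorem dft_eq_sum_range {N : ℕ} [NeZero N] (f : ZMod N → ℂ) (α : ZMod N) :
    dft f α = (N : ℂ)⁻¹ * ∑ x ∈ range N, f x * dftRoot N α.valMinAbs ^ x := by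
  rw [dft, dftRoot_valMinAbs]
  congr 1
  refine sum_nbij' ZMod.val (↑) (fun x _ => mem_range.mpr x.val_lt) (fun _ _ => mem_univ _)
    (fun x _ => ZMod.natCast_zmod_val x) (fun x hx => ZMod.val_cast_of_lt (mem_range.mp hx))
    fun x _ => ?_
  rw [ZMod.natCast_zmod_val, ← exp_nat_mul]
  ring_nf

theorem dft_bitFn (i j : ℕ) (α : ZMod (2 ^ (i + j + 1))) :
    dft (bitFn (i + j + 1) i) α = (2 ^ (i + j + 1) : ℂ)⁻¹ *
      ((∑ s ∈ range (2 ^ (j + 1)), (-dftRoot (2 ^ (i + j + 1)) α.valMinAbs ^ 2 ^ i) ^ s) *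
        ∑ r ∈ range (2 ^ i), dftRoot (2 ^ (i + j + 1)) α.valMinAbs ^ r) := by
  rw [dft_eq_sum_range, ← sum_range_two_pow_mul_testBit,
    show 2 ^ i * 2 ^ (j + 1) = 2 ^ (i + j + 1) by ring]
  push_cast
  congr 1
  refine sum_congr rfl fun x hx => ?_
  rw [bitFn, ZMod.val_cast_of_lt (mem_range.mp hx)]

theorem dft_bitFn_eq_zero {i j : ℕ} {α : ZMod (2 ^ (i + j + 1))}
    (h : dftRoot (2 ^ (i + j + 1)) α.valMinAbs ^ 2 ^ i ≠ -1) : dft (bitFn (i + j + 1) i) α = 0 := by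
  set q := dftRoot (2 ^ (i + j + 1)) α.valMinAbs
  have hp : -q ^ 2 ^ i ≠ 1 := fun hp => h (by linear_combination -hp)
  have hpow : (-q ^ 2 ^ i) ^ 2 ^ (j + 1) = 1 := by
    rw [neg_pow, ← pow_mul, ← pow_add, ← add_assoc, dftRoot_pow_self (by positivity), mul_one,
      Even.neg_one_pow (Nat.even_pow.mpr ⟨even_two, by omega⟩)]
  rw [dft_bitFn, geom_sum_eq hp, hpow, sub_self, zero_div, zero_mul, mul_zero]

theorem exists_odd_eq_mul_two_pow_of_dftRoot_pow_eq_neg_one {i j : ℕ} {b : ℤ}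
    (h : dftRoot (2 ^ (i + j + 1)) b ^ 2 ^ i = -1) : ∃ m : ℤ, Odd m ∧ b = m * 2 ^ j := by
  have hq : dftRoot (2 ^ (i + j + 1)) b ^ 2 ^ i = exp (-(π * I * b / 2 ^ j)) := by
    rw [dftRoot, ← exp_nat_mul]
    congr 1
    push_cast
    field_simp
    ring
  rw [hq, ← exp_pi_mul_I, exp_eq_exp_iff_exists_int] at h
  obtain ⟨n, hn⟩ := h
  refine ⟨-(2 * n + 1), ⟨-n - 1, by ring⟩, ?_⟩
  field_simp at hn
  have : (b : ℂ) = ((-(2 * n + 1) * 2 ^ j : ℤ) : ℂ) := by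
    push_cast
    linear_combination -hn
  exact_mod_cast this

theorem norm_dft_bitFn_le {i j : ℕ} {α : ZMod (2 ^ (i + j + 1))}
    (h : dftRoot (2 ^ (i + j + 1)) α.valMinAbs ^ 2 ^ i = -1) :
    ‖dft (bitFn (i + j + 1) i) α‖ ≤ 2 ^ (j + 1) / (α.valMinAbs.natAbs : ℝ) := by
  set b := α.valMinAbs
  set q := dftRoot (2 ^ (i + j + 1)) b
  have hq : q ≠ 1 := by rintro hq; norm_num [hq] at h
  have hb : 0 < |(b : ℝ)| := by
    refine abs_pos.mpr (Int.cast_ne_zero.mpr fun hb => hq ?_)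
    simp [q, hb, dftRoot]
  have hbN : |b| * 2 ≤ (2 ^ (i + j + 1) : ℕ) := by
    obtain ⟨h₁, h₂⟩ := α.valMinAbs_mem_Ioc
    rw [← abs_two, ← abs_mul]
    exact abs_le.mpr ⟨h₁.le, h₂⟩
  calc ‖dft (bitFn (i + j + 1) i) α‖ = 2 ^ (j + 1) * 2 / (2 ^ (i + j + 1) * ‖q - 1‖) := by
        rw [dft_bitFn, geom_sum_eq hq, h, neg_neg]
        simp only [one_pow, sum_const, card_range, nsmul_eq_mul, Nat.cast_pow, Nat.cast_ofNat,
          mul_one, Complex.norm_mul, norm_inv, norm_pow, norm_ofNat, Complex.norm_div]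
        rw [show ‖(-1 - 1 : ℂ)‖ = 2 by norm_num]
        ring
    _ ≤ 2 ^ (j + 1) * 2 / (4 * |(b : ℝ)|) := by
        refine div_le_div_of_nonneg_left (by positivity) (by positivity) ?_
        exact_mod_cast four_mul_abs_le_mul_norm_dftRoot_sub_one (by positivity) hbN
    _ ≤ 2 ^ (j + 1) / (b.natAbs : ℝ) := by
        rw [Nat.cast_natAbs, Int.cast_abs, div_le_div_iff₀ (by positivity) hb]
        nlinarith [mul_pos (pow_pos two_pos (j + 1)) hb]

theorem stmt14_general (k i : ℕ) (hik : i < k) (α : ZMod (2 ^ k)) :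
    ((¬ ∃ m : ℤ, Odd m ∧ α = ((m : ZMod (2 ^ k)) * 2 ^ (k - i - 1))) →
        dft (bitFn k i) α = 0)
    ∧ (dft (bitFn k i) α ≠ 0 →
        ‖dft (bitFn k i) α‖
          ≤ 2 ^ (k - i) / ((α.valMinAbs.natAbs : ℝ))) := by
  obtain ⟨j, rfl⟩ : ∃ j, k = i + j + 1 := ⟨k - i - 1, by omega⟩
  rw [show i + j + 1 - i - 1 = j by omega, show i + j + 1 - i = j + 1 by omega]
  by_cases h : dftRoot (2 ^ (i + j + 1)) α.valMinAbs ^ 2 ^ i = -1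
  · refine ⟨fun hα => absurd ?_ hα, fun _ => norm_dft_bitFn_le h⟩
    obtain ⟨m, hm, hb⟩ := exists_odd_eq_mul_two_pow_of_dftRoot_pow_eq_neg_one h
    exact ⟨m, hm, by rw [← α.coe_valMinAbs, hb]; push_cast; rfl⟩
  · exact ⟨fun _ => dft_bitFn_eq_zero h, fun hne => absurd (dft_bitFn_eq_zero h) hne⟩

/-- Fourier coefficients of the `i`-th bit function on `ℤ_{2^k}`: `bit_i^(α) = 0`
unless `α` is an odd multiple of `2^{k−i−1}`, and every nonzero coefficient
satisfies `|bit_i^(α)| ≤ 2^{k−i}/| |α|_{2^k} |`. -/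
theorem stmt14 (k i : ℕ) (hk : 1 ≤ k) (hik : i < k) (α : ZMod (2 ^ k)) :
    ((¬ ∃ m : ℤ, Odd m ∧ α = ((m : ZMod (2 ^ k)) * 2 ^ (k - i - 1))) →
        dft (bitFn k i) α = 0)
    ∧ (dft (bitFn k i) α ≠ 0 →
        ‖dft (bitFn k i) α‖
          ≤ 2 ^ (k - i) / ((α.valMinAbs.natAbs : ℝ))) :=
  stmt14_general k i hik α
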